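/- Suppose p is an odd prime and F is a field. Let W(G) = {x ∈ F[G] : x is fixed by the F-linear extension of every automorphism of G} be the maximal rational S-ring over G = Z_{p^{λ_1}} × ⋯ × Z_{p^{λ_n}}. Then the family of simple quantities {H̄ : H a characteristic subgroup of G} is linearly independent and spans W(G), i.e., it is an F-basis of W(G). -/

import Mathlib

/-!
For odd `p`, a characteristic subgroup `H` of `G = ∏ ZMod (p ^ λ i)` is closed under the
coordinate projections (use the automorphism multiplying one coordinate by the unit `2`) and
under adding a shifted coordinate to another one (transvections). Hence `H` is the box
`{g | ∀ i, p ^ b i ∣ g i}` whose exponents `b i` are the minimal valuations in `H`, and `b` is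
admissible: `b i ≤ λ i - λ j + b j`. Conversely, admissible boxes are stable under all
endomorphisms, and transvections followed by unit scalings move every `g` to the base point
`(p ^ a i)ᵢ` of its height vector `a`. So the base point `x_H` of `H` satisfies
`x_H ∈ K ↔ H ≤ K`, and every element of `G` lies in the orbit of some `x_H`.

The values of the simple quantities at the points `x_H` then form a unitriangular matrix, which
gives linear independence; an `Aut(G)`-invariant element of `F[G]` is determined by its values
at the `x_H`, which gives spanning.
-/

open scoped Classical

noncomputable section

/-- The simple quantity `C̄ = ∑_{g ∈ C} g` of a subset `C` of an additive group `G`,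
inside the group algebra `F[G]`. -/
def sqty (F : Type*) [Field F] {G : Type*} [AddGroup G] [Fintype G] (C : Set G) :
    AddMonoidAlgebra F G :=
  ∑ g ∈ Finset.univ.filter (· ∈ C), AddMonoidAlgebra.single g (1 : F)

section Unitriangular

variable {ι X F : Type*} [Field F] [PartialOrder ι]

-- The matrix is unitriangular: look at a maximal index carrying a nonzero coefficient.
theorem linearIndependent_indicator_apply {S : ι → Set X} {x : ι → X}
    (hx : ∀ i j, x i ∈ S j ↔ i ≤ j) :
    LinearIndependent F (fun j i => (S j).indicator (1 : X → F) (x i)) := by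
  rw [linearIndependent_iff']
  intro s c hsum
  by_contra! hne
  obtain ⟨i, hi⟩ :=
    (s.filter (c · ≠ 0)).exists_maximal (by simpa [Finset.filter_nonempty_iff])
  have hi_mem := Finset.mem_filter.mp hi.prop
  have hc_above : ∀ j ∈ s, j ≠ i → c j • (S j).indicator (1 : X → F) (x i) = 0 := by
    intro j hj hji
    by_cases hij : i ≤ j
    · have : c j = 0 := by
        by_contra hcj
        exact hji (hi.eq_of_le (Finset.mem_filter.mpr ⟨hj, hcj⟩) hij).symm
      simp [this]
    · simp [Set.indicator_of_notMem (mt (hx i j).mp hij)]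
  have hval := congrFun hsum i
  simp only [Finset.sum_apply, Pi.smul_apply, Pi.zero_apply] at hval
  rw [Finset.sum_eq_single_of_mem i hi_mem.1 hc_above,
    Set.indicator_of_mem ((hx i i).mpr le_rfl)] at hval
  exact hi_mem.2 (by simpa using hval)

end Unitriangular

section GroupAlgebra

variable (F : Type*) [Field F] (G : Type*) [AddGroup G]

def autInvariants : Submodule F (AddMonoidAlgebra F G) where
  carrier := {x | ∀ φ : AddAut G, AddMonoidAlgebra.mapDomain (⇑φ) x = x}
  add_mem' hx hy φ := by rw [AddMonoidAlgebra.mapDomain_add, hx φ, hy φ]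
  zero_mem' _ := AddMonoidAlgebra.mapDomain_zero _
  smul_mem' c x hx φ := by
    apply AddMonoidAlgebra.coeff_injective
    rw [AddMonoidAlgebra.coeff_mapDomain, AddMonoidAlgebra.coeff_smul, Finsupp.mapDomain_smul,
      ← AddMonoidAlgebra.coeff_mapDomain, hx φ]

variable {F G}

theorem coeff_aut_apply_of_mem_autInvariants {x : AddMonoidAlgebra F G}
    (hx : x ∈ autInvariants F G) (φ : AddAut G) (g : G) : x.coeff (φ g) = x.coeff g := by
  rw [← Finsupp.mapDomain_apply φ.injective x.coeff g, ← AddMonoidAlgebra.coeff_mapDomain,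
    hx φ]

variable [Fintype G]

theorem coeff_sqty (C : Set G) (g : G) : (sqty F C).coeff g = C.indicator 1 g := by
  simp [sqty, AddMonoidAlgebra.coeff_sum, Finsupp.single_apply, Set.indicator_apply]

theorem sqty_mem_autInvariants {C : Set G} (hC : ∀ (φ : AddAut G) g, φ g ∈ C ↔ g ∈ C) :
    sqty F C ∈ autInvariants F G := by
  intro φ
  apply AddMonoidAlgebra.coeff_injective
  ext g
  obtain ⟨g, rfl⟩ := φ.surjective g
  simp only [AddMonoidAlgebra.coeff_mapDomain, Finsupp.mapDomain_apply φ.injective, coeff_sqty,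
    Set.indicator_apply, Pi.one_apply, hC]

end GroupAlgebra

section OrbitRepresentatives

variable {F : Type*} [Field F] {G : Type*} [AddGroup G] {ι : Type*} {x : ι → G}

variable (F) in
def evalAt (x : ι → G) : AddMonoidAlgebra F G →ₗ[F] ι → F where
  toFun y i := y.coeff (x i)
  map_add' _ _ := rfl
  map_smul' _ _ := rfl

theorem eq_zero_of_evalAt_eq_zero (hrep : ∀ g, ∃ i, ∃ φ : AddAut G, φ g = x i)
    {y : AddMonoidAlgebra F G} (hy : y ∈ autInvariants F G) (h0 : evalAt F x y = 0) : y = 0 := by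
  apply AddMonoidAlgebra.coeff_injective
  ext g
  obtain ⟨i, φ, hφ⟩ := hrep g
  rw [← coeff_aut_apply_of_mem_autInvariants hy φ, hφ]
  exact congrFun h0 i

variable [Fintype G]

theorem evalAt_sqty (C : Set G) : evalAt F x (sqty F C) = fun i => C.indicator 1 (x i) :=
  funext fun i => coeff_sqty C (x i)

variable [PartialOrder ι] {S : ι → Set G}

theorem linearIndependent_evalAt_sqty (hx : ∀ i j, x i ∈ S j ↔ i ≤ j) :
    LinearIndependent F (evalAt F x ∘ fun i => sqty F (S i)) := by
  simpa only [Function.comp_def, evalAt_sqty] using linearIndependent_indicator_apply hx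

theorem linearIndependent_sqty (hx : ∀ i j, x i ∈ S j ↔ i ≤ j) :
    LinearIndependent F (fun i => sqty F (S i)) :=
  .of_comp (evalAt F x) (linearIndependent_evalAt_sqty hx)

-- `evalAt F x` is injective on invariants and maps the span of the `sqty F (S i)` onto `ι → F`.
theorem span_sqty_eq_autInvariants [Finite ι] (hx : ∀ i j, x i ∈ S j ↔ i ≤ j)
    (hS : ∀ i (φ : AddAut G) g, φ g ∈ S i ↔ g ∈ S i)
    (hrep : ∀ g, ∃ i, ∃ φ : AddAut G, φ g = x i) :
    Submodule.span F (Set.range fun i => sqty F (S i)) = autInvariants F G := by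
  have : Fintype ι := Fintype.ofFinite ι
  have hle : Submodule.span F (Set.range fun i => sqty F (S i)) ≤ autInvariants F G :=
    Submodule.span_le.mpr <| Set.range_subset_iff.mpr fun i => sqty_mem_autInvariants (hS i)
  refine le_antisymm hle fun y hy => ?_
  have htop : Submodule.span F (Set.range (evalAt F x ∘ fun i => sqty F (S i))) = ⊤ :=
    (linearIndependent_evalAt_sqty hx).span_eq_top_of_card_eq_finrank'
      (Module.finrank_fintype_fun_eq_card F).symm
  have hyspan : evalAt F x y ∈
      (Submodule.span F (Set.range fun i => sqty F (S i))).map (evalAt F x) := by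
    rw [Submodule.map_span, ← Set.range_comp, htop]
    exact Submodule.mem_top
  obtain ⟨z, hz, hzy⟩ := hyspan
  have hyz : y - z = 0 :=
    eq_zero_of_evalAt_eq_zero hrep (sub_mem hy (hle hz)) (by rw [map_sub, hzy, sub_self])
  rwa [sub_eq_zero.mp hyz]

end OrbitRepresentatives

theorem AddSubgroup.Characteristic.apply_mem_iff {G : Type*} [AddGroup G] {H : AddSubgroup G}
    (hH : H.Characteristic) (φ : AddAut G) {g : G} : φ g ∈ H ↔ g ∈ H :=
  SetLike.ext_iff.mp (hH.fixed φ) g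

abbrev CharacteristicAddSubgroup (G : Type*) [AddGroup G] :=
  {H : AddSubgroup G // ∀ φ : AddAut G, H.map φ.toAddMonoidHom = H}

theorem characteristic_subgroups_basis_of_generators {G : Type*} [AddGroup G] [Fintype G]
    (F : Type*) [Field F] (x : CharacteristicAddSubgroup G → G)
    (hx : ∀ H K : CharacteristicAddSubgroup G, x H ∈ K.1 ↔ H ≤ K)
    (hrep : ∀ g, ∃ H, ∃ φ : AddAut G, φ g = x H) :
    LinearIndependent F
      (fun H : CharacteristicAddSubgroup G => sqty F ((H : AddSubgroup G) : Set G)) ∧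
    ∀ y : AddMonoidAlgebra F G,
      y ∈ Submodule.span F (Set.range fun H : CharacteristicAddSubgroup G =>
        sqty F ((H : AddSubgroup G) : Set G)) ↔
      ∀ φ : AddAut G, AddMonoidAlgebra.mapDomain (⇑φ) y = y := by
  refine ⟨linearIndependent_sqty hx, fun y => ?_⟩
  rw [span_sqty_eq_autInvariants hx
    (fun H => (AddSubgroup.characteristic_iff_map_eq.mpr H.2).apply_mem_iff) hrep]
  rfl

section PVal

variable {p m : ℕ}

-- The `p`-adic valuation on `ZMod (p ^ m)`: the largest `k ≤ m` with `p ^ k ∣ x`.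
def pval (p m : ℕ) (x : ZMod (p ^ m)) : ℕ := if x = 0 then m else x.val.factorization p

@[simp] theorem pval_zero : pval p m 0 = m := if_pos rfl

variable [hp : Fact p.Prime]

theorem natCast_pow_eq_zero_iff {k : ℕ} : (p : ZMod (p ^ m)) ^ k = 0 ↔ m ≤ k := by
  rw [← Nat.cast_pow, ZMod.natCast_eq_zero_iff, Nat.pow_dvd_pow_iff_le_right hp.out.one_lt]

theorem isUnit_natCast_of_not_dvd {s : ℕ} (hs : ¬ p ∣ s) : IsUnit (s : ZMod (p ^ m)) :=
  (ZMod.isUnit_iff_coprime _ _).mpr <| ((hp.out.coprime_iff_not_dvd).mpr hs).symm.pow_right _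

theorem val_eq_pow_pval_mul {x : ZMod (p ^ m)} (hx : x ≠ 0) :
    ∃ s, ¬ p ∣ s ∧ x.val = p ^ pval p m x * s := by
  have hval : x.val ≠ 0 := (ZMod.val_ne_zero x).mpr hx
  rw [pval, if_neg hx]
  exact ⟨_, Nat.not_dvd_ordCompl hp.out hval, (Nat.ordProj_mul_ordCompl_eq_self x.val p).symm⟩

theorem exists_isUnit_eq_pow_pval (x : ZMod (p ^ m)) :
    ∃ u : ZMod (p ^ m), IsUnit u ∧ x = (p : ZMod (p ^ m)) ^ pval p m x * u := by
  rcases eq_or_ne x 0 with rfl | hx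
  · exact ⟨1, isUnit_one, by rw [pval_zero, natCast_pow_eq_zero_iff.mpr le_rfl, zero_mul]⟩
  obtain ⟨s, hs, hval⟩ := val_eq_pow_pval_mul hx
  refine ⟨s, isUnit_natCast_of_not_dvd hs, ?_⟩
  conv_lhs => rw [← ZMod.natCast_zmod_val x, hval]
  push_cast
  rfl

theorem pval_lt_of_ne_zero {x : ZMod (p ^ m)} (hx : x ≠ 0) : pval p m x < m := by
  by_contra! h
  obtain ⟨u, -, hxu⟩ := exists_isUnit_eq_pow_pval x
  rw [natCast_pow_eq_zero_iff.mpr h, zero_mul] at hxu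
  exact hx hxu

theorem pval_le (x : ZMod (p ^ m)) : pval p m x ≤ m := by
  rcases eq_or_ne x 0 with rfl | hx
  · exact pval_zero.le
  · exact (pval_lt_of_ne_zero hx).le

theorem isNilpotent_natCast_self : IsNilpotent (p : ZMod (p ^ m)) :=
  ⟨m, natCast_pow_eq_zero_iff.mpr le_rfl⟩

-- `u - p ^ (j - k) * v` is a unit, being a unit minus a nilpotent element.
theorem eq_of_pow_mul_eq_pow_mul {k j : ℕ} (hk : k < m) (hj : j < m) {u v : ZMod (p ^ m)}
    (hu : IsUnit u) (hv : IsUnit v) (h : (p : ZMod (p ^ m)) ^ k * u = p ^ j * v) : k = j := by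
  wlog hkj : k ≤ j generalizing k j u v
  · exact (this hj hk hv hu h.symm (le_of_not_ge hkj)).symm
  by_contra hne
  have hnil : IsNilpotent (-((p : ZMod (p ^ m)) ^ (j - k) * v)) :=
    ((Commute.all _ _).isNilpotent_mul_right
      (isNilpotent_natCast_self.pow_of_pos (by omega))).neg
  have hunit := hnil.isUnit_add_left_of_commute hu (Commute.all _ _)
  have hzero : (p : ZMod (p ^ m)) ^ k * (u + -((p : ZMod (p ^ m)) ^ (j - k) * v)) = 0 := by
    rw [mul_add, h, mul_neg, ← mul_assoc, ← pow_add, Nat.add_sub_cancel' hkj, add_neg_cancel]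
  rw [hunit.mul_left_eq_zero, natCast_pow_eq_zero_iff] at hzero
  omega

theorem pval_pow_mul_of_isUnit {k : ℕ} {u : ZMod (p ^ m)} (hu : IsUnit u) :
    pval p m ((p : ZMod (p ^ m)) ^ k * u) = min k m := by
  rcases le_or_gt m k with hmk | hkm
  · rw [natCast_pow_eq_zero_iff.mpr hmk, zero_mul, pval_zero, min_eq_right hmk]
  have hne : (p : ZMod (p ^ m)) ^ k * u ≠ 0 := by
    rw [Ne, hu.mul_left_eq_zero, natCast_pow_eq_zero_iff]
    omega
  obtain ⟨v, hv, hkv⟩ := exists_isUnit_eq_pow_pval ((p : ZMod (p ^ m)) ^ k * u)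
  rw [min_eq_left hkm.le]
  exact (eq_of_pow_mul_eq_pow_mul hkm (pval_lt_of_ne_zero hne) hu hv hkv).symm

theorem pval_pow {k : ℕ} : pval p m ((p : ZMod (p ^ m)) ^ k) = min k m := by
  simpa using pval_pow_mul_of_isUnit (k := k) (isUnit_one (M := ZMod (p ^ m)))

theorem pval_pow_mul {k : ℕ} (x : ZMod (p ^ m)) :
    pval p m ((p : ZMod (p ^ m)) ^ k * x) = min (k + pval p m x) m := by
  obtain ⟨u, hu, hx⟩ := exists_isUnit_eq_pow_pval x
  conv_lhs => rw [hx, ← mul_assoc, ← pow_add]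
  exact pval_pow_mul_of_isUnit hu

theorem pow_dvd_iff_le_pval {k : ℕ} (hk : k ≤ m) {x : ZMod (p ^ m)} :
    (p : ZMod (p ^ m)) ^ k ∣ x ↔ k ≤ pval p m x := by
  constructor
  · rintro ⟨y, rfl⟩
    rw [pval_pow_mul]
    omega
  · intro h
    obtain ⟨u, -, hx⟩ := exists_isUnit_eq_pow_pval x
    rw [hx, ← Nat.add_sub_cancel' h, pow_add, mul_assoc]
    exact dvd_mul_right _ _

theorem min_pval_le_pval_add (x y : ZMod (p ^ m)) :
    min (pval p m x) (pval p m y) ≤ pval p m (x + y) := by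
  have hle : min (pval p m x) (pval p m y) ≤ m := min_le_of_left_le (pval_le x)
  rw [← pow_dvd_iff_le_pval hle]
  exact dvd_add ((pow_dvd_iff_le_pval hle).mpr (min_le_left _ _))
    ((pow_dvd_iff_le_pval hle).mpr (min_le_right _ _))

theorem pval_neg (x : ZMod (p ^ m)) : pval p m (-x) = pval p m x := by
  obtain ⟨u, hu, hx⟩ := exists_isUnit_eq_pow_pval x
  rw [hx, ← mul_neg, pval_pow_mul_of_isUnit hu.neg, pval_pow_mul_of_isUnit hu]

theorem pval_add_of_lt {x y : ZMod (p ^ m)} (h : pval p m y < pval p m x) :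
    pval p m (x + y) = pval p m y := by
  have h₁ := min_pval_le_pval_add x y
  have h₂ := min_pval_le_pval_add (x + y) (-x)
  rw [add_neg_cancel_comm, pval_neg] at h₂
  omega

theorem exists_mul_eq_of_pval_le {x y : ZMod (p ^ m)} (h : pval p m x ≤ pval p m y) :
    ∃ t, y = t * x := by
  obtain ⟨u, hu, hx⟩ := exists_isUnit_eq_pow_pval x
  obtain ⟨v, -, hy⟩ := exists_isUnit_eq_pow_pval y
  set a := pval p m x
  set b := pval p m y
  refine ⟨(p : ZMod (p ^ m)) ^ (b - a) * v * hu.unit⁻¹, ?_⟩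
  have hpow : (p : ZMod (p ^ m)) ^ (b - a) * p ^ a = p ^ b := by
    rw [← pow_add, Nat.sub_add_cancel h]
  have hinv : (hu.unit⁻¹ : (ZMod (p ^ m))ˣ) * u = 1 := hu.val_inv_mul
  rw [hx, hy]
  linear_combination (-v) * hpow - (p : ZMod (p ^ m)) ^ (b - a) * p ^ a * v * hinv

theorem pow_sub_dvd_of_pow_mul_eq_zero {e : ℕ} {z : ZMod (p ^ m)}
    (h : (p : ZMod (p ^ m)) ^ e * z = 0) : (p : ZMod (p ^ m)) ^ (m - e) ∣ z := by
  have hval := pval_pow_mul (k := e) z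
  rw [h, pval_zero] at hval
  rw [pow_dvd_iff_le_pval (Nat.sub_le m e)]
  omega

end PVal

def addAutOfSquareZero {A : Type*} [AddCommGroup A] (f : A →+ A) (hf : ∀ a, f (f a) = 0) :
    AddAut A where
  toFun a := a + f a
  invFun a := a - f a
  left_inv a := by simp [hf]
  right_inv a := by simp [hf]
  map_add' a b := by simp only [map_add]; abel

abbrev PGroupOfType (p : ℕ) {n : ℕ} (lam : Fin n → ℕ) := ∀ i : Fin n, ZMod (p ^ lam i)

section Transvections

variable {p : ℕ} [Fact p.Prime] {n : ℕ} {lam : Fin n → ℕ}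

variable (p lam) in
-- `x ↦ p ^ (lam i - lam j) * x`, a reduction modulo `p ^ lam i` when `lam i < lam j`.
def shiftHom (i j : Fin n) : ZMod (p ^ lam j) →+ ZMod (p ^ lam i) :=
  ZMod.lift _ ⟨(AddMonoidHom.mulLeft ((p : ZMod (p ^ lam i)) ^ (lam i - lam j))).comp
    (Int.castAddHom _), by
      change (p : ZMod (p ^ lam i)) ^ (lam i - lam j) * (((p ^ lam j : ℕ) : ℤ) : ZMod _) = 0
      rw [Int.cast_natCast, Nat.cast_pow, ← pow_add, natCast_pow_eq_zero_iff]
      omega⟩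

theorem shiftHom_apply (i j : Fin n) (x : ZMod (p ^ lam j)) :
    shiftHom p lam i j x = (p : ZMod (p ^ lam i)) ^ (lam i - lam j) * x.val := by
  conv_lhs => rw [← ZMod.natCast_zmod_val x, ← Int.cast_natCast, shiftHom, ZMod.lift_coe]
  simp

theorem pval_shiftHom (i j : Fin n) (x : ZMod (p ^ lam j)) :
    pval p (lam i) (shiftHom p lam i j x) = min (lam i - lam j + pval p (lam j) x) (lam i) := by
  rcases eq_or_ne x 0 with rfl | hx
  · rw [map_zero, pval_zero, pval_zero]
    omega
  obtain ⟨s, hs, hval⟩ := val_eq_pow_pval_mul hx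
  rw [shiftHom_apply, hval, Nat.cast_mul, Nat.cast_pow, ← mul_assoc, ← pow_add,
    pval_pow_mul_of_isUnit (isUnit_natCast_of_not_dvd hs)]

variable (lam) in
def transvection (i j : Fin n) (hij : i ≠ j) : AddAut (PGroupOfType p lam) :=
  addAutOfSquareZero ((AddMonoidHom.single _ i).comp ((shiftHom p lam i j).comp
    (Pi.evalAddMonoidHom _ j))) fun g => by simp [Pi.single_eq_of_ne hij.symm]

theorem transvection_apply (i j : Fin n) (hij : i ≠ j) (g : PGroupOfType p lam) :
    transvection lam i j hij g = g + Pi.single i (shiftHom p lam i j (g j)) :=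
  rfl

end Transvections

section Boxes

variable {p : ℕ} {n : ℕ} {lam : Fin n → ℕ}

variable (lam) in
def Admissible (a : Fin n → ℕ) : Prop :=
  a ≤ lam ∧ ∀ i j, a i ≤ lam i - lam j + a j

variable (p lam) in
def box (b : Fin n → ℕ) : AddSubgroup (PGroupOfType p lam) where
  carrier := {g | ∀ i, (p : ZMod (p ^ lam i)) ^ b i ∣ g i}
  add_mem' hg hh i := dvd_add (hg i) (hh i)
  zero_mem' _ := dvd_zero _
  neg_mem' hg i := (dvd_neg).mpr (hg i)

variable (p lam) in
def basePoint (a : Fin n → ℕ) : PGroupOfType p lam := fun i => (p : ZMod (p ^ lam i)) ^ a i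

-- The exponents of the smallest box with admissible exponents that contains `g`.
def height (g : PGroupOfType p lam) (i : Fin n) : ℕ :=
  Finset.univ.inf' ⟨i, Finset.mem_univ i⟩ fun j => lam i - lam j + pval p (lam j) (g j)

theorem mem_box_iff {b : Fin n → ℕ} {g : PGroupOfType p lam} :
    g ∈ box p lam b ↔ ∀ i, (p : ZMod (p ^ lam i)) ^ b i ∣ g i :=
  Iff.rfl

theorem box_anti : Antitone (box p lam) :=
  fun _ _ hab _ hg i => (pow_dvd_pow _ (hab i)).trans (hg i)

theorem height_le (g : PGroupOfType p lam) (i j : Fin n) :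
    height g i ≤ lam i - lam j + pval p (lam j) (g j) :=
  Finset.inf'_le _ (Finset.mem_univ j)

theorem le_height {g : PGroupOfType p lam} {i : Fin n} {c : ℕ}
    (h : ∀ j, c ≤ lam i - lam j + pval p (lam j) (g j)) : c ≤ height g i :=
  Finset.le_inf' _ _ fun j _ => h j

theorem exists_height_eq (g : PGroupOfType p lam) (i : Fin n) :
    ∃ j, height g i = lam i - lam j + pval p (lam j) (g j) := by
  obtain ⟨j, -, hj⟩ := Finset.exists_mem_eq_inf' ⟨i, Finset.mem_univ i⟩
    fun j => lam i - lam j + pval p (lam j) (g j)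
  exact ⟨j, hj⟩

theorem height_le_pval (g : PGroupOfType p lam) (i : Fin n) :
    height g i ≤ pval p (lam i) (g i) := by
  simpa using height_le g i i

variable [Fact p.Prime]

theorem basePoint_mem_box_iff {a b : Fin n → ℕ} (ha : a ≤ lam) (hb : b ≤ lam) :
    basePoint p lam a ∈ box p lam b ↔ b ≤ a := by
  simp only [mem_box_iff, basePoint, pow_dvd_iff_le_pval (hb _), pval_pow, Pi.le_def]
  exact forall_congr' fun i => by rw [min_eq_left (ha i)]

theorem box_le_box_iff {a b : Fin n → ℕ} (ha : a ≤ lam) (hb : b ≤ lam) :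
    box p lam a ≤ box p lam b ↔ b ≤ a :=
  ⟨fun h => (basePoint_mem_box_iff ha hb).mp (h ((basePoint_mem_box_iff ha ha).mpr le_rfl)),
    fun h => box_anti h⟩

theorem height_admissible (g : PGroupOfType p lam) : Admissible lam (height g) := by
  refine ⟨fun i => (height_le_pval g i).trans (pval_le _), fun i j => ?_⟩
  obtain ⟨k, hk⟩ := exists_height_eq g j
  have := height_le g i k
  omega

theorem mem_box_iff_le_height {b : Fin n → ℕ} (hb : Admissible lam b) {g : PGroupOfType p lam} :
    g ∈ box p lam b ↔ b ≤ height g := by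
  simp only [mem_box_iff, pow_dvd_iff_le_pval (hb.1 _)]
  exact ⟨fun h i => le_height fun j => (hb.2 i j).trans (by have := h j; omega),
    fun h i => (h i).trans (height_le_pval g i)⟩

-- `e = f (Pi.single j 1)` is killed by `p ^ lam j`, so `p ^ (lam i - lam j)` divides `e i`.
theorem map_single_mem_box {b : Fin n → ℕ} (hb : Admissible lam b)
    (f : PGroupOfType p lam →+ PGroupOfType p lam) {j : Fin n} {x : ZMod (p ^ lam j)}
    (hx : (p : ZMod (p ^ lam j)) ^ b j ∣ x) : f (Pi.single j x) ∈ box p lam b := by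
  obtain ⟨y, rfl⟩ := hx
  set e := f (Pi.single j 1)
  have hsingle : (Pi.single j ((p : ZMod (p ^ lam j)) ^ b j * y) : PGroupOfType p lam) =
      (p ^ b j * y.val) • Pi.single j 1 := by
    rw [← Pi.single_smul, nsmul_eq_mul, mul_one, Nat.cast_mul, Nat.cast_pow,
      ZMod.natCast_zmod_val]
  have hkill : (p ^ lam j) • e = 0 := by
    rw [← map_nsmul, ← Pi.single_smul, nsmul_eq_mul, mul_one, ZMod.natCast_self, Pi.single_zero,
      map_zero]
  intro i
  have hdvd : (p : ZMod (p ^ lam i)) ^ (lam i - lam j) ∣ e i := by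
    apply pow_sub_dvd_of_pow_mul_eq_zero
    simpa using congrFun hkill i
  rw [hsingle, map_nsmul, Pi.smul_apply, nsmul_eq_mul, Nat.cast_mul, Nat.cast_pow, mul_right_comm]
  refine Dvd.dvd.mul_right ?_ _
  calc (p : ZMod (p ^ lam i)) ^ b i ∣ p ^ (b j + (lam i - lam j)) :=
        pow_dvd_pow _ (by have := hb.2 i j; omega)
    _ ∣ p ^ b j * e i := by rw [pow_add]; exact mul_dvd_mul_left _ hdvd

theorem map_mem_box {b : Fin n → ℕ} (hb : Admissible lam b)
    (f : PGroupOfType p lam →+ PGroupOfType p lam) {g : PGroupOfType p lam}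
    (hg : g ∈ box p lam b) : f g ∈ box p lam b := by
  rw [← Finset.univ_sum_single g, map_sum]
  exact AddSubgroup.sum_mem _ fun j _ => map_single_mem_box hb f (hg j)

theorem box_characteristic {b : Fin n → ℕ} (hb : Admissible lam b) :
    (box p lam b).Characteristic :=
  AddSubgroup.characteristic_iff_le_comap.mpr fun φ _ hg => map_mem_box hb φ.toAddMonoidHom hg

theorem height_le_height_map (f : PGroupOfType p lam →+ PGroupOfType p lam)
    (g : PGroupOfType p lam) : height g ≤ height (f g) :=
  (mem_box_iff_le_height (height_admissible g)).mp <|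
    map_mem_box (height_admissible g) f <| (mem_box_iff_le_height (height_admissible g)).mpr le_rfl

theorem height_map (φ : AddAut (PGroupOfType p lam)) (g : PGroupOfType p lam) :
    height (φ g) = height g := by
  refine le_antisymm ?_ (height_le_height_map φ.toAddMonoidHom g)
  simpa using height_le_height_map φ.symm.toAddMonoidHom (φ g)

end Boxes

section NormalForm

variable {p : ℕ} [Fact p.Prime] {n : ℕ} {lam : Fin n → ℕ}

-- A transvection along a coordinate `j` realising the minimum in `height g i`.
theorem exists_aut_pval_eq_height_at {g : PGroupOfType p lam} {i : Fin n}
    (hi : height g i < pval p (lam i) (g i)) :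
    ∃ φ : AddAut (PGroupOfType p lam),
      (∀ k ≠ i, φ g k = g k) ∧ pval p (lam i) (φ g i) = height g i := by
  obtain ⟨j, hj⟩ := exists_height_eq g i
  have hij : i ≠ j := by
    rintro rfl
    simp only [Nat.sub_self, zero_add] at hj
    omega
  have hshift : pval p (lam i) (shiftHom p lam i j (g j)) = height g i := by
    have : height g i ≤ lam i := (height_admissible g).1 i
    rw [pval_shiftHom]
    omega
  refine ⟨transvection lam i j hij, fun k hk => ?_, ?_⟩
  · rw [transvection_apply, Pi.add_apply, Pi.single_eq_of_ne hk, add_zero]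
  · rw [transvection_apply, Pi.add_apply, Pi.single_eq_same, pval_add_of_lt (hshift ▸ hi),
      hshift]

theorem exists_aut_pval_eq_height (g : PGroupOfType p lam) :
    ∃ φ : AddAut (PGroupOfType p lam), ∀ i, pval p (lam i) (φ g i) = height g i := by
  induction hd : ∑ i, (pval p (lam i) (g i) - height g i) using Nat.strong_induction_on
    generalizing g with
  | _ d ih =>
  by_cases hall : ∀ i, pval p (lam i) (g i) = height g i
  · exact ⟨0, hall⟩
  push Not at hall
  obtain ⟨i, hi⟩ := hall
  have hi' : height g i < pval p (lam i) (g i) := lt_of_le_of_ne (height_le_pval g i) (Ne.symm hi)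
  obtain ⟨ψ, hψ, hψi⟩ := exists_aut_pval_eq_height_at hi'
  have hlt : ∑ k, (pval p (lam k) (ψ g k) - height (ψ g) k) < d := by
    rw [height_map, ← hd]
    refine Finset.sum_lt_sum (fun k _ => ?_) ⟨i, Finset.mem_univ i, by omega⟩
    rcases eq_or_ne k i with rfl | hk
    · omega
    · rw [hψ k hk]
  obtain ⟨φ, hφ⟩ := ih _ hlt (ψ g) rfl
  exact ⟨φ + ψ, fun k => by rw [AddAut.add_apply, hφ k, height_map]⟩

theorem exists_aut_eq_basePoint {g : PGroupOfType p lam} {a : Fin n → ℕ}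
    (h : ∀ i, pval p (lam i) (g i) = a i) :
    ∃ φ : AddAut (PGroupOfType p lam), φ g = basePoint p lam a := by
  choose u hu hgu using fun i => exists_isUnit_eq_pow_pval (g i)
  have hunit : IsUnit (u : PGroupOfType p lam) := Pi.isUnit_iff.mpr hu
  refine ⟨AddAut.mulRight hunit.unit⁻¹, ?_⟩
  have hg : g = basePoint p lam a * u := funext fun i => by rw [hgu i, h i]; rfl
  rw [AddAut.mulRight_apply, hg, mul_assoc, IsUnit.mul_val_inv, mul_one]

theorem exists_aut_eq_basePoint_height (g : PGroupOfType p lam) :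
    ∃ φ : AddAut (PGroupOfType p lam), φ g = basePoint p lam (height g) := by
  obtain ⟨ψ, hψ⟩ := exists_aut_pval_eq_height g
  obtain ⟨φ, hφ⟩ := exists_aut_eq_basePoint hψ
  exact ⟨φ + ψ, hφ⟩

end NormalForm

section Characteristic

variable {p : ℕ} {n : ℕ} {lam : Fin n → ℕ} {H : AddSubgroup (PGroupOfType p lam)}

def minPval (H : AddSubgroup (PGroupOfType p lam)) (i : Fin n) : ℕ :=
  sInf ((fun g : PGroupOfType p lam => pval p (lam i) (g i)) '' H)

theorem minPval_le {g : PGroupOfType p lam} (hg : g ∈ H) (i : Fin n) :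
    minPval H i ≤ pval p (lam i) (g i) :=
  Nat.sInf_le ⟨g, hg, rfl⟩

theorem exists_pval_eq_minPval (H : AddSubgroup (PGroupOfType p lam)) (i : Fin n) :
    ∃ g ∈ H, pval p (lam i) (g i) = minPval H i :=
  Nat.sInf_mem ⟨_, Set.mem_image_of_mem _ H.zero_mem⟩

variable [hp : Fact p.Prime]

-- `1 + Pi.single i 1` is a unit as `2` is, and multiplying `g` by it adds `Pi.single i (g i)`.
theorem single_mem_of_characteristic (hp2 : p ≠ 2) (hH : H.Characteristic)
    {g : PGroupOfType p lam} (hg : g ∈ H) (i : Fin n) : Pi.single i (g i) ∈ H := by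
  have hunit : IsUnit (1 + Pi.single i 1 : PGroupOfType p lam) := by
    refine Pi.isUnit_iff.mpr fun k => ?_
    rcases eq_or_ne k i with rfl | hk
    · rw [Pi.add_apply, Pi.single_eq_same, Pi.one_apply, one_add_one_eq_two, ← Nat.cast_ofNat]
      exact isUnit_natCast_of_not_dvd
        fun h => hp2 ((Nat.prime_dvd_prime_iff_eq hp.out Nat.prime_two).mp h)
    · simp [Pi.single_eq_of_ne hk]
  have hmem := sub_mem ((hH.apply_mem_iff (AddAut.mulRight hunit.unit)).mpr hg) hg
  rwa [AddAut.mulRight_apply, IsUnit.unit_spec, mul_add, mul_one, add_sub_cancel_left,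
    ← Pi.single_mul_right, mul_one] at hmem

theorem single_shiftHom_mem_of_characteristic (hH : H.Characteristic)
    {g : PGroupOfType p lam} (hg : g ∈ H) {i j : Fin n} (hij : i ≠ j) :
    Pi.single i (shiftHom p lam i j (g j)) ∈ H := by
  have hmem := sub_mem ((hH.apply_mem_iff (transvection lam i j hij)).mpr hg) hg
  rwa [transvection_apply, add_sub_cancel_left] at hmem

theorem minPval_admissible (hH : H.Characteristic) : Admissible lam (minPval H) := by
  refine ⟨fun i => by simpa using minPval_le H.zero_mem i, fun i j => ?_⟩
  rcases eq_or_ne i j with rfl | hij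
  · omega
  obtain ⟨g, hg, hgj⟩ := exists_pval_eq_minPval H j
  have := minPval_le (single_shiftHom_mem_of_characteristic hH hg hij) i
  rw [Pi.single_eq_same, pval_shiftHom, hgj] at this
  omega

theorem minPval_box {b : Fin n → ℕ} (hb : b ≤ lam) : minPval (box p lam b) = b := by
  funext i
  refine le_antisymm ?_ ?_
  · simpa [basePoint, pval_pow, min_eq_left (hb i)] using
      minPval_le ((basePoint_mem_box_iff (p := p) hb hb).mpr le_rfl) i
  · obtain ⟨g, hg, hgi⟩ := exists_pval_eq_minPval (box p lam b) i
    rw [← hgi, ← pow_dvd_iff_le_pval (p := p) (hb i)]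
    exact hg i

theorem eq_box_minPval (hp2 : p ≠ 2) (hH : H.Characteristic) : H = box p lam (minPval H) := by
  have hadm := minPval_admissible hH
  refine le_antisymm (fun g hg i => (pow_dvd_iff_le_pval (hadm.1 i)).mpr (minPval_le hg i))
    fun g hg => ?_
  rw [← Finset.univ_sum_single g]
  refine AddSubgroup.sum_mem _ fun i _ => ?_
  obtain ⟨g₀, hg₀, hg₀i⟩ := exists_pval_eq_minPval H i
  obtain ⟨t, ht⟩ := exists_mul_eq_of_pval_le (x := g₀ i) (y := g i)
    (hg₀i ▸ (pow_dvd_iff_le_pval (hadm.1 i)).mp (hg i))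
  rw [ht, ← ZMod.natCast_zmod_val t, ← nsmul_eq_mul, Pi.single_smul]
  exact AddSubgroup.nsmul_mem _ (single_mem_of_characteristic hp2 hH hg₀ i) _

theorem basePoint_minPval_mem_iff (hp2 : p ≠ 2) {K : AddSubgroup (PGroupOfType p lam)}
    (hH : H.Characteristic) (hK : K.Characteristic) :
    basePoint p lam (minPval H) ∈ K ↔ H ≤ K := by
  have hHa := (minPval_admissible hH).1
  have hKa := (minPval_admissible hK).1
  rw [SetLike.ext_iff.mp (eq_box_minPval hp2 hK), basePoint_mem_box_iff hHa hKa,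
    ← box_le_box_iff (p := p) hHa hKa, ← eq_box_minPval hp2 hH, ← eq_box_minPval hp2 hK]

end Characteristic

theorem characteristic_subgroups_basis_general (p : ℕ) (hp : p.Prime) (hp2 : p ≠ 2) [NeZero p]
    (F : Type*) [Field F]
    (n : ℕ) (lam : Fin n → ℕ) :
    LinearIndependent F
      (fun H : {H : AddSubgroup (∀ i : Fin n, ZMod (p ^ lam i)) //
          ∀ φ : AddAut (∀ i : Fin n, ZMod (p ^ lam i)), H.map φ.toAddMonoidHom = H} =>
        sqty F ((H : AddSubgroup (∀ i : Fin n, ZMod (p ^ lam i))) :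
          Set (∀ i : Fin n, ZMod (p ^ lam i)))) ∧
    ∀ x : AddMonoidAlgebra F (∀ i : Fin n, ZMod (p ^ lam i)),
      x ∈ Submodule.span F (Set.range
          (fun H : {H : AddSubgroup (∀ i : Fin n, ZMod (p ^ lam i)) //
              ∀ φ : AddAut (∀ i : Fin n, ZMod (p ^ lam i)), H.map φ.toAddMonoidHom = H} =>
            sqty F ((H : AddSubgroup (∀ i : Fin n, ZMod (p ^ lam i))) :
              Set (∀ i : Fin n, ZMod (p ^ lam i))))) ↔
        ∀ φ : AddAut (∀ i : Fin n, ZMod (p ^ lam i)), AddMonoidAlgebra.mapDomain (⇑φ) x = x := by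
  have : Fact p.Prime := ⟨hp⟩
  have hchar (H : CharacteristicAddSubgroup (PGroupOfType p lam)) :=
    AddSubgroup.characteristic_iff_map_eq.mpr H.2
  refine characteristic_subgroups_basis_of_generators F (fun H => basePoint p lam (minPval H.1))
    (fun H K => basePoint_minPval_mem_iff hp2 (hchar H) (hchar K)) fun g => ?_
  have hadm := height_admissible g
  refine ⟨⟨box p lam (height g), AddSubgroup.characteristic_iff_map_eq.mp
    (box_characteristic hadm)⟩, ?_⟩
  simpa only [minPval_box hadm.1] using exists_aut_eq_basePoint_height g

/-- For an odd prime `p` and `G = Z_{p^{λ_1}} × ⋯ × Z_{p^{λ_n}}`, the simple quantities of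
the characteristic subgroups of `G` are linearly independent and span the maximal rational
S-ring `W(G) = {x ∈ F[G] : x is fixed by every automorphism of G}`; i.e. they form an
`F`-basis of `W(G)`. -/
theorem characteristic_subgroups_basis (p : ℕ) (hp : p.Prime) (hp2 : p ≠ 2) [NeZero p]
    (F : Type*) [Field F]
    (n : ℕ) (hn : 1 ≤ n) (lam : Fin n → ℕ) (hlam : ∀ i, 1 ≤ lam i) (hmono : Monotone lam) :
    LinearIndependent F
      (fun H : {H : AddSubgroup (∀ i : Fin n, ZMod (p ^ lam i)) //
          ∀ φ : AddAut (∀ i : Fin n, ZMod (p ^ lam i)), H.map φ.toAddMonoidHom = H} =>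
        sqty F ((H : AddSubgroup (∀ i : Fin n, ZMod (p ^ lam i))) :
          Set (∀ i : Fin n, ZMod (p ^ lam i)))) ∧
    ∀ x : AddMonoidAlgebra F (∀ i : Fin n, ZMod (p ^ lam i)),
      x ∈ Submodule.span F (Set.range
          (fun H : {H : AddSubgroup (∀ i : Fin n, ZMod (p ^ lam i)) //
              ∀ φ : AddAut (∀ i : Fin n, ZMod (p ^ lam i)), H.map φ.toAddMonoidHom = H} =>
            sqty F ((H : AddSubgroup (∀ i : Fin n, ZMod (p ^ lam i))) :
              Set (∀ i : Fin n, ZMod (p ^ lam i))))) ↔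
        ∀ φ : AddAut (∀ i : Fin n, ZMod (p ^ lam i)), AddMonoidAlgebra.mapDomain (⇑φ) x = x :=
  characteristic_subgroups_basis_general p hp hp2 F n lam
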